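/- For every q ∈ ℕ and every unit vector ξ = (ξ₁,ξ₂) ∈ S¹ ∩ 𝔠₀, setting v₁* = (−ξ₂, ξ₁) and v₂* = (ξ₁, ξ₂), one has h_q(ξ, v₁*, v₂*) = −(q!)² K_ξ^{−2}. -/

import Mathlib

open Real Set

noncomputable def gfun (t : ℝ) : ℝ := (Real.sqrt (1 - t^2) - t * Real.arccos t) / Real.pi

noncomputable def Kcurv (t : ℝ) : ℝ :=
  deriv (deriv gfun) t / (1 + (deriv gfun t)^2) ^ ((3:ℝ)/2)

def cone0 : Set (ℝ × ℝ) := {x | 0 < x.1 ∧ 0 < x.2 ∧ 1 < x.2 / x.1}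

noncomputable def tpar (ξ : ℝ × ℝ) : ℝ := Real.cos (Real.pi * ξ.1 / ξ.2)

noncomputable def Kxi (ξ : ℝ × ℝ) : ℝ := Kcurv (tpar ξ)

noncomputable def xpt (ξ : ℝ × ℝ) : ℝ × ℝ := (tpar ξ, gfun (tpar ξ))

noncomputable def Hfun (ξ : ℝ × ℝ) : ℝ := ξ.1 * (xpt ξ).1 + ξ.2 * (xpt ξ).2

noncomputable def enorm2 (x : ℝ × ℝ) : ℝ := Real.sqrt (x.1^2 + x.2^2)

noncomputable def pd1 (f : ℝ × ℝ → ℝ) : ℝ × ℝ → ℝ := fun x => fderiv ℝ f x (1, 0)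
noncomputable def pd2 (f : ℝ × ℝ → ℝ) : ℝ × ℝ → ℝ := fun x => fderiv ℝ f x (0, 1)

/-- `g_{i,j}(y, v₁, v₂) = ∂^{q+2} F / (∂u₁ ∂u_i ∂u_j ∂u₂^{q-1}) (0,0)`
for `F(u₁,u₂) = H(y + u₁ v₁ + u₂ v₂)`. -/
noncomputable def gij (q : ℕ) (y v₁ v₂ : ℝ × ℝ) (i j : Fin 2) : ℝ :=
  pd1 ((if i = 0 then pd1 else pd2)
    ((if j = 0 then pd1 else pd2)
      (pd2^[q-1] (fun u : ℝ × ℝ => Hfun (y + u.1 • v₁ + u.2 • v₂))))) (0, 0)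

noncomputable def hq (q : ℕ) (y v₁ v₂ : ℝ × ℝ) : ℝ :=
  gij q y v₁ v₂ 0 0 * gij q y v₁ v₂ 1 1 - gij q y v₁ v₂ 0 1 * gij q y v₁ v₂ 1 0


/-!
`Hfun` is positively homogeneous of degree one, so with `φ r = Hfun (ξ + r • ξ⊥)` the function
`F u = Hfun (ξ + u.1 • ξ⊥ + u.2 • ξ)` is the perspective `F (s, t) = (1 + t) * φ (s / (1 + t))`.
Moving the `u₁`-derivatives inside, each `g_{i,j}` becomes a `u₂`-derivative at `0` of
`∂₁ᵏ F (0, t) = (1 + t) ^ (1 - k) * φ⁽ᵏ⁾ 0`. For `g_{2,2}` (`k = 1`) this is constant, so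
`g_{2,2} = 0`, while `g_{1,2} = g_{2,1} = (-1) ^ q * q! * φ'' 0`. Finally
`φ'' 0 = -π sin (π ξ₁ / ξ₂) / ξ₂³ = -1 / K_ξ`: the second derivative of the support function along
the tangent is the radius of curvature.
-/

open Filter Topology
open scoped ContDiff

section PartialDeriv

variable {E F : Type*} [NormedAddCommGroup E] [NormedSpace ℝ E] [NormedAddCommGroup F]
  [NormedSpace ℝ F] {f g : E → F} {s : Set E}

noncomputable def partialDeriv (v : E) (f : E → F) : E → F := fun x => fderiv ℝ f x v

lemma partialDeriv_congr (hs : IsOpen s) (h : EqOn f g s) (v : E) :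
    EqOn (partialDeriv v f) (partialDeriv v g) s := fun x hx => by
  simp only [partialDeriv, (h.eventuallyEq_of_mem (hs.mem_nhds hx)).fderiv_eq]

lemma contDiffOn_partialDeriv (hf : ContDiffOn ℝ ∞ f s) (hs : IsOpen s) (v : E) :
    ContDiffOn ℝ ∞ (partialDeriv v f) s :=
  (hf.fderiv_of_isOpen hs (by simp)).clm_apply contDiffOn_const

lemma contDiffOn_partialDeriv_iterate (hf : ContDiffOn ℝ ∞ f s) (hs : IsOpen s) (v : E)
    (k : ℕ) : ContDiffOn ℝ ∞ ((partialDeriv v)^[k] f) s := by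
  induction k with
  | zero => exact hf
  | succ k ih => simpa only [Function.iterate_succ_apply'] using contDiffOn_partialDeriv ih hs v

lemma partialDeriv_comm (hf : ContDiffOn ℝ ∞ f s) (hs : IsOpen s) (v w : E) :
    EqOn (partialDeriv v (partialDeriv w f)) (partialDeriv w (partialDeriv v f)) s := by
  intro x hx
  have hfx : ContDiffAt ℝ ∞ f x := hf.contDiffAt (hs.mem_nhds hx)
  have hdf : DifferentiableAt ℝ (fderiv ℝ f) x :=
    ((hf.fderiv_of_isOpen hs (m := ∞) (by simp)).contDiffAt (hs.mem_nhds hx)).differentiableAt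
      (by simp)
  have hsymm : IsSymmSndFDerivAt ℝ f x := hfx.isSymmSndFDerivAt (by simpa using ENat.LEInfty.out)
  show fderiv ℝ (fun y => fderiv ℝ f y w) x v = fderiv ℝ (fun y => fderiv ℝ f y v) x w
  simpa [fderiv_clm_apply hdf (differentiableAt_const _)] using hsymm v w

lemma partialDeriv_iterate_comm (hf : ContDiffOn ℝ ∞ f s) (hs : IsOpen s) (v w : E) (k : ℕ) :
    EqOn (partialDeriv v ((partialDeriv w)^[k] f)) ((partialDeriv w)^[k] (partialDeriv v f)) s := by
  induction k with
  | zero => exact fun _ _ => rfl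
  | succ k ih =>
    simp only [Function.iterate_succ_apply']
    exact (partialDeriv_comm (contDiffOn_partialDeriv_iterate hf hs w k) hs v w).trans
      (partialDeriv_congr hs ih w)

lemma partialDeriv_iterate_add_smul (hf : ContDiffOn ℝ ∞ f s) (hs : IsOpen s) (v x : E) (k : ℕ)
    {t : ℝ} (ht : x + t • v ∈ s) :
    (partialDeriv v)^[k] f (x + t • v) = iteratedDeriv k (fun r => f (x + r • v)) t := by
  induction k generalizing t with
  | zero => simp
  | succ k ih =>
    have hnear : ∀ᶠ r in 𝓝 t, x + r • v ∈ s :=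
      (by fun_prop : Continuous fun r : ℝ => x + r • v).continuousAt.preimage_mem_nhds
        (hs.mem_nhds ht)
    have hdiff : DifferentiableAt ℝ ((partialDeriv v)^[k] f) (x + t • v) :=
      ((contDiffOn_partialDeriv_iterate hf hs v k).contDiffAt (hs.mem_nhds ht)).differentiableAt
        (by simp)
    have hderiv : HasDerivAt (fun r => (partialDeriv v)^[k] f (x + r • v))
        ((partialDeriv v)^[k + 1] f (x + t • v)) t := by
      rw [Function.iterate_succ_apply']
      show HasDerivAt _ (fderiv ℝ ((partialDeriv v)^[k] f) (x + t • v) v) t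
      simpa [Function.comp_def] using hdiff.hasFDerivAt.comp_hasDerivAt t
        (((hasDerivAt_id t).smul_const v).const_add x)
    rw [← hderiv.deriv, iteratedDeriv_succ]
    exact EventuallyEq.deriv_eq (hnear.mono fun r hr => ih hr)

end PartialDeriv

section OneVariable

variable {𝕜 F : Type*} [NontriviallyNormedField 𝕜] [NormedAddCommGroup F] [NormedSpace 𝕜 F]

lemma iteratedDeriv_comp_mul_left (n : ℕ) (f : 𝕜 → F) (c x : 𝕜) :
    iteratedDeriv n (fun y => f (c * y)) x = c ^ n • iteratedDeriv n f (c * x) := by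
  induction n generalizing x with
  | zero => simp
  | succ n ih =>
    rw [iteratedDeriv_succ, funext ih, deriv_fun_const_smul_field,
      deriv_comp_mul_left c (iteratedDeriv n f), iteratedDeriv_succ, smul_smul, pow_succ]

end OneVariable

lemma iteratedDeriv_inv_one_add_zero (k : ℕ) :
    iteratedDeriv k (fun t : ℝ => (1 + t)⁻¹) 0 = (-1) ^ k * k.factorial := by
  have h := congrFun (iter_deriv_inv_linear k (1 : ℝ) 1) 0
  simp only [one_mul, mul_zero, zero_add, one_pow, one_zpow, mul_one] at h
  rw [iteratedDeriv_eq_iterate, ← h]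
  simp only [add_comm]

section Slices

variable {f : ℝ × ℝ → ℝ} {s : Set (ℝ × ℝ)}

lemma pd1_eq_partialDeriv : pd1 = partialDeriv ((1 : ℝ), (0 : ℝ)) := rfl

lemma pd2_eq_partialDeriv : pd2 = partialDeriv ((0 : ℝ), (1 : ℝ)) := rfl

lemma pd1_iterate_apply (hf : ContDiffOn ℝ ∞ f s) (hs : IsOpen s) (k : ℕ) {p t : ℝ}
    (h : (p, t) ∈ s) : pd1^[k] f (p, t) = iteratedDeriv k (fun r => f (r, t)) p := by
  rw [pd1_eq_partialDeriv]
  simpa using partialDeriv_iterate_add_smul hf hs (1, 0) (0, t) k (t := p) (by simpa using h)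

lemma pd2_iterate_apply (hf : ContDiffOn ℝ ∞ f s) (hs : IsOpen s) (k : ℕ) {p t : ℝ}
    (h : (p, t) ∈ s) : pd2^[k] f (p, t) = iteratedDeriv k (fun r => f (p, r)) t := by
  rw [pd2_eq_partialDeriv]
  simpa using partialDeriv_iterate_add_smul hf hs (0, 1) (p, 0) k (t := t) (by simpa using h)

lemma pd1_congr {g : ℝ × ℝ → ℝ} (hs : IsOpen s) (h : EqOn f g s) : EqOn (pd1 f) (pd1 g) s :=
  partialDeriv_congr hs h _

lemma contDiffOn_pd1 (hf : ContDiffOn ℝ ∞ f s) (hs : IsOpen s) : ContDiffOn ℝ ∞ (pd1 f) s :=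
  contDiffOn_partialDeriv hf hs _

lemma contDiffOn_pd2_iterate (hf : ContDiffOn ℝ ∞ f s) (hs : IsOpen s) (k : ℕ) :
    ContDiffOn ℝ ∞ (pd2^[k] f) s :=
  contDiffOn_partialDeriv_iterate hf hs _ k

lemma pd2_pd1_comm (hf : ContDiffOn ℝ ∞ f s) (hs : IsOpen s) :
    EqOn (pd2 (pd1 f)) (pd1 (pd2 f)) s :=
  partialDeriv_comm hf hs _ _

lemma pd1_pd2_iterate_comm (hf : ContDiffOn ℝ ∞ f s) (hs : IsOpen s) (k : ℕ) :
    EqOn (pd1 (pd2^[k] f)) (pd2^[k] (pd1 f)) s :=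
  partialDeriv_iterate_comm hf hs _ _ k

end Slices

section Perspective

variable {F : ℝ × ℝ → ℝ} {φ : ℝ → ℝ} {V : Set (ℝ × ℝ)}

lemma iteratedDeriv_slice_of_perspective
    (hFφ : ∀ s t, 1 + t ≠ 0 → F (s, t) = (1 + t) * φ ((1 + t)⁻¹ * s)) {t : ℝ}
    (ht : 1 + t ≠ 0) (k : ℕ) :
    iteratedDeriv k (fun s => F (s, t)) 0 = (1 + t) ^ (1 - k : ℤ) * iteratedDeriv k φ 0 := by
  rw [funext fun s => hFφ s t ht, iteratedDeriv_const_mul_field, iteratedDeriv_comp_mul_left,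
    mul_zero, smul_eq_mul, zpow_sub₀ ht, zpow_one, zpow_natCast, inv_pow]
  ring

lemma pd1_iterate_vertical_eventuallyEq (hV : IsOpen V) (h0 : ((0 : ℝ), (0 : ℝ)) ∈ V)
    (hF : ContDiffOn ℝ ∞ F V) (hFφ : ∀ s t, 1 + t ≠ 0 → F (s, t) = (1 + t) * φ ((1 + t)⁻¹ * s))
    (k : ℕ) :
    (fun t => pd1^[k] F (0, t)) =ᶠ[𝓝 0] fun t => (1 + t) ^ (1 - k : ℤ) * iteratedDeriv k φ 0 := by
  have hmem : ∀ᶠ t in 𝓝 (0 : ℝ), ((0 : ℝ), t) ∈ V :=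
    (by fun_prop : Continuous fun t : ℝ => ((0 : ℝ), t)).continuousAt.preimage_mem_nhds
      (hV.mem_nhds h0)
  have hne : ∀ᶠ t in 𝓝 (0 : ℝ), 1 + t ≠ 0 :=
    (by fun_prop : Continuous fun t : ℝ => 1 + t).continuousAt.eventually_ne (by norm_num)
  filter_upwards [hmem, hne] with t ht ht'
  rw [pd1_iterate_apply hF hV k ht, iteratedDeriv_slice_of_perspective hFφ ht' k]

lemma pd1_pd2_iterate_succ_eq_zero_of_perspective (hV : IsOpen V)
    (h0 : ((0 : ℝ), (0 : ℝ)) ∈ V) (hF : ContDiffOn ℝ ∞ F V)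
    (hFφ : ∀ s t, 1 + t ≠ 0 → F (s, t) = (1 + t) * φ ((1 + t)⁻¹ * s)) (k : ℕ) :
    pd1 (pd2^[k + 1] F) (0, 0) = 0 := by
  have hslice := pd1_iterate_vertical_eventuallyEq hV h0 hF hFφ 1
  rw [pd1_pd2_iterate_comm hF hV (k + 1) h0, pd2_iterate_apply (contDiffOn_pd1 hF hV) hV _ h0,
    EventuallyEq.iteratedDeriv_eq _ (by simpa using hslice)]
  simp [iteratedDeriv_const]

lemma pd1_pd1_pd2_iterate_of_perspective (hV : IsOpen V)
    (h0 : ((0 : ℝ), (0 : ℝ)) ∈ V) (hF : ContDiffOn ℝ ∞ F V)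
    (hFφ : ∀ s t, 1 + t ≠ 0 → F (s, t) = (1 + t) * φ ((1 + t)⁻¹ * s)) (k : ℕ) :
    pd1 (pd1 (pd2^[k] F)) (0, 0) = (-1) ^ k * k.factorial * iteratedDeriv 2 φ 0 := by
  have hF1 := contDiffOn_pd1 hF hV
  have hslice := pd1_iterate_vertical_eventuallyEq hV h0 hF hFφ 2
  rw [pd1_congr hV (pd1_pd2_iterate_comm hF hV k) h0, pd1_pd2_iterate_comm hF1 hV k h0,
    pd2_iterate_apply (contDiffOn_pd1 hF1 hV) hV k h0,
    EventuallyEq.iteratedDeriv_eq _ (by simpa using hslice), iteratedDeriv_mul_const_field,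
    iteratedDeriv_inv_one_add_zero]

end Perspective

lemma tpar_smul {c : ℝ} (hc : c ≠ 0) (x : ℝ × ℝ) : tpar (c • x) = tpar x := by
  simp only [tpar, Prod.smul_fst, Prod.smul_snd, smul_eq_mul, mul_left_comm π c,
    mul_div_mul_left _ _ hc]

lemma Hfun_smul {c : ℝ} (hc : c ≠ 0) (x : ℝ × ℝ) : Hfun (c • x) = c * Hfun x := by
  simp only [Hfun, xpt, tpar_smul hc, Prod.smul_fst, Prod.smul_snd, smul_eq_mul]
  ring

lemma Hfun_of_lt {x : ℝ × ℝ} (h1 : 0 < x.1) (h2 : x.1 < x.2) :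
    Hfun x = x.2 * sin (π * x.1 / x.2) / π := by
  have hx2 : 0 < x.2 := h1.trans h2
  have hθ0 : 0 < π * x.1 / x.2 := by positivity
  have hθπ : π * x.1 / x.2 < π := by
    rw [div_lt_iff₀ hx2]; nlinarith [pi_pos]
  have hsqrt : √(1 - cos (π * x.1 / x.2) ^ 2) = sin (π * x.1 / x.2) := by
    rw [← sin_sq, sqrt_sq (sin_nonneg_of_nonneg_of_le_pi hθ0.le hθπ.le)]
  simp only [Hfun, xpt, tpar, gfun, hsqrt, arccos_cos hθ0.le hθπ.le]
  field_simp
  ring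

lemma contDiffOn_Hfun : ContDiffOn ℝ ∞ Hfun {x : ℝ × ℝ | 0 < x.1 ∧ x.1 < x.2} := by
  have hsmooth : ContDiffOn ℝ ∞ (fun x : ℝ × ℝ => x.2 * sin (π * x.1 / x.2) / π)
      {x : ℝ × ℝ | 0 < x.1 ∧ x.1 < x.2} :=
    fun x hx => by
      have : x.2 ≠ 0 := (hx.1.trans hx.2).ne'
      exact ContDiffAt.contDiffWithinAt (by fun_prop (disch := assumption))
  exact hsmooth.congr fun x hx => Hfun_of_lt hx.1 hx.2

lemma isOpen_setOf_pos_lt : IsOpen {x : ℝ × ℝ | 0 < x.1 ∧ x.1 < x.2} :=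
  (isOpen_lt continuous_const continuous_fst).inter (isOpen_lt continuous_fst continuous_snd)

section Frame

variable {a b : ℝ}

lemma Hfun_frame {s t : ℝ} (ht : 1 + t ≠ 0) :
    Hfun ((a, b) + s • (-b, a) + t • (a, b))
      = (1 + t) * Hfun ((a, b) + ((1 + t)⁻¹ * s) • (-b, a)) := by
  have hpoint : ((a, b) : ℝ × ℝ) + s • (-b, a) + t • (a, b)
      = (1 + t) • ((a, b) + ((1 + t)⁻¹ * s) • (-b, a)) := by
    ext <;> simp <;> field_simp <;> ring
  rw [hpoint, Hfun_smul ht]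

lemma exists_isOpen_contDiffOn_Hfun_frame (ha : 0 < a) (hab : a < b) :
    ∃ V : Set (ℝ × ℝ), IsOpen V ∧ ((0 : ℝ), (0 : ℝ)) ∈ V ∧
      ContDiffOn ℝ ∞ (fun u : ℝ × ℝ => Hfun ((a, b) + u.1 • (-b, a) + u.2 • (a, b))) V := by
  have hframe : ContDiff ℝ ∞ fun u : ℝ × ℝ => ((a, b) : ℝ × ℝ) + u.1 • (-b, a) + u.2 • (a, b) := by
    fun_prop
  exact ⟨_, isOpen_setOf_pos_lt.preimage hframe.continuous, by simpa using ⟨ha, hab⟩,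
    contDiffOn_Hfun.comp hframe.contDiffOn (mapsTo_preimage _ _)⟩

-- The angle `π x₁ / x₂` at the point `x = (a, b) + r • (-b, a)` of the tangent line.
variable (a b) in
noncomputable def tangentAngle (r : ℝ) : ℝ := π * (a - r * b) / (b + r * a)

lemma hasDerivAt_tangentAngle (hu : a ^ 2 + b ^ 2 = 1) {r : ℝ} (hr : b + r * a ≠ 0) :
    HasDerivAt (tangentAngle a b) (-π / (b + r * a) ^ 2) r := by
  have hnum : HasDerivAt (fun r => π * (a - r * b)) (π * -b) r := by
    simpa using (((hasDerivAt_id r).mul_const b).const_sub a).const_mul π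
  have hden : HasDerivAt (fun r => b + r * a) a r := by
    simpa using ((hasDerivAt_id r).mul_const a).const_add b
  refine (hnum.fun_div hden hr).congr_deriv ?_
  field_simp
  linear_combination -hu

lemma hasDerivAt_tangent_support (hu : a ^ 2 + b ^ 2 = 1) {r : ℝ} (hr : b + r * a ≠ 0) :
    HasDerivAt (fun r => (b + r * a) * sin (tangentAngle a b r) / π)
      (a * sin (tangentAngle a b r) / π - cos (tangentAngle a b r) / (b + r * a)) r := by
  have hden : HasDerivAt (fun r => b + r * a) a r := by
    simpa using ((hasDerivAt_id r).mul_const a).const_add b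
  refine ((hden.mul (hasDerivAt_tangentAngle hu hr).sin).div_const π).congr_deriv ?_
  field_simp
  ring

lemma hasDerivAt_tangent_support_deriv (hu : a ^ 2 + b ^ 2 = 1) (hb : b ≠ 0) :
    HasDerivAt (fun r => a * sin (tangentAngle a b r) / π - cos (tangentAngle a b r) / (b + r * a))
      (-π * sin (π * a / b) / b ^ 3) 0 := by
  have hr : b + 0 * a ≠ 0 := by simpa using hb
  have hden : HasDerivAt (fun r => b + r * a) a 0 := by
    simpa using ((hasDerivAt_id (0 : ℝ)).mul_const a).const_add b
  have hθ := hasDerivAt_tangentAngle hu hr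
  refine (((hθ.sin.const_mul a).div_const π).sub (hθ.cos.fun_div hden hr)).congr_deriv ?_
  simp only [tangentAngle, zero_mul, sub_zero, add_zero]
  field_simp
  ring

lemma iteratedDeriv_two_Hfun_tangent (ha : 0 < a) (hab : a < b) (hu : a ^ 2 + b ^ 2 = 1) :
    iteratedDeriv 2 (fun r : ℝ => Hfun ((a, b) + r • (-b, a))) 0
      = -π * sin (π * a / b) / b ^ 3 := by
  have hb : b ≠ 0 := (ha.trans hab).ne'
  have hexplicit : (fun r : ℝ => Hfun ((a, b) + r • (-b, a)))
      =ᶠ[𝓝 0] fun r => (b + r * a) * sin (tangentAngle a b r) / π := by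
    have hline : Continuous fun r : ℝ => ((a, b) : ℝ × ℝ) + r • (-b, a) := by fun_prop
    filter_upwards [hline.continuousAt.preimage_mem_nhds
      (isOpen_setOf_pos_lt.mem_nhds (by simpa using ⟨ha, hab⟩))] with r hr
    rw [Hfun_of_lt hr.1 hr.2]
    simp only [tangentAngle, Prod.smul_mk, Prod.mk_add_mk, smul_eq_mul]
    ring_nf
  have hderiv : deriv (fun r => (b + r * a) * sin (tangentAngle a b r) / π)
      =ᶠ[𝓝 0] fun r =>
        a * sin (tangentAngle a b r) / π - cos (tangentAngle a b r) / (b + r * a) := by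
    have hne : ∀ᶠ r in 𝓝 (0 : ℝ), b + r * a ≠ 0 :=
      (by fun_prop : Continuous fun r : ℝ => b + r * a).continuousAt.eventually_ne
        (by simpa using hb)
    filter_upwards [hne] with r hr using (hasDerivAt_tangent_support hu hr).deriv
  rw [hexplicit.iteratedDeriv_eq, iteratedDeriv_succ, iteratedDeriv_one, hderiv.deriv_eq,
    (hasDerivAt_tangent_support_deriv hu hb).deriv]

end Frame

lemma hasDerivAt_gfun {t : ℝ} (h1 : -1 < t) (h2 : t < 1) :
    HasDerivAt gfun (-arccos t / π) t := by
  have hpos : 0 < 1 - t ^ 2 := by nlinarith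
  have hsqrt : HasDerivAt (fun s => √(1 - s ^ 2)) (1 / (2 * √(1 - t ^ 2)) * -(2 * t)) t :=
    (hasDerivAt_sqrt hpos.ne').comp t (by simpa using ((hasDerivAt_pow 2 t).const_sub 1))
  have harccos : HasDerivAt (fun s => s * arccos s) (1 * arccos t + t * -(1 / √(1 - t ^ 2))) t :=
    (hasDerivAt_id t).mul (hasDerivAt_arccos h1.ne' h2.ne)
  refine ((hsqrt.sub harccos).div_const π).congr_deriv ?_
  have : √(1 - t ^ 2) ≠ 0 := by positivity
  field_simp
  ring

lemma deriv_deriv_gfun {t : ℝ} (h1 : -1 < t) (h2 : t < 1) :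
    deriv (deriv gfun) t = 1 / (π * √(1 - t ^ 2)) := by
  have hderiv : deriv gfun =ᶠ[𝓝 t] fun s => -arccos s / π := by
    filter_upwards [isOpen_Ioo.mem_nhds ⟨h1, h2⟩] with s hs using (hasDerivAt_gfun hs.1 hs.2).deriv
  rw [hderiv.deriv_eq]
  refine ((hasDerivAt_arccos h1.ne' h2.ne).neg.div_const π).deriv.trans ?_
  field_simp

lemma Kcurv_cos {θ : ℝ} (h0 : 0 < θ) (hπ : θ < π) :
    Kcurv (cos θ) = 1 / (π * sin θ * (1 + (θ / π) ^ 2) ^ ((3 : ℝ) / 2)) := by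
  have hsin : 0 < sin θ := sin_pos_of_pos_of_lt_pi h0 hπ
  have h1 : -1 < cos θ := by
    rw [← cos_pi]; exact cos_lt_cos_of_nonneg_of_le_pi h0.le le_rfl hπ
  have h2 : cos θ < 1 := by
    rw [← cos_zero]; exact cos_lt_cos_of_nonneg_of_le_pi le_rfl hπ.le h0
  have hsqrt : √(1 - cos θ ^ 2) = sin θ := by rw [← sin_sq, sqrt_sq hsin.le]
  rw [Kcurv, deriv_deriv_gfun h1 h2, (hasDerivAt_gfun h1 h2).deriv, arccos_cos h0.le hπ.le, hsqrt]
  field_simp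

lemma Kxi_eq {a b : ℝ} (ha : 0 < a) (hab : a < b) (hu : a ^ 2 + b ^ 2 = 1) :
    Kxi (a, b) = b ^ 3 / (π * sin (π * a / b)) := by
  have hb : 0 < b := ha.trans hab
  have hθπ : π * a / b < π := by rw [div_lt_iff₀ hb]; nlinarith [pi_pos]
  have hbase : 1 + (π * a / b / π) ^ 2 = b⁻¹ ^ 2 := by
    field_simp
    linarith
  rw [Kxi, tpar, Kcurv_cos (by positivity) hθπ, hbase, ← rpow_natCast, ← rpow_mul (by positivity)]
  norm_num
  field_simp

theorem hq_value_at_orthonormal_frame_general (q : ℕ) (ξ : ℝ × ℝ)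
    (hξc : ξ ∈ cone0) (hξu : enorm2 ξ = 1) :
    hq q ξ (-ξ.2, ξ.1) (ξ.1, ξ.2) = -((q.factorial : ℝ))^2 * (Kxi ξ ^ 2)⁻¹ := by
  obtain ⟨a, b⟩ := ξ
  obtain ⟨ha, -, hba⟩ := hξc
  have hab : a < b := by simpa using (one_lt_div ha).1 hba
  have hu : a ^ 2 + b ^ 2 = 1 := sqrt_eq_one.1 hξu
  obtain ⟨V, hV, h0, hF⟩ := exists_isOpen_contDiffOn_Hfun_frame ha hab
  simp only [hq, gij, Fin.isValue, ↓reduceIte, one_ne_zero]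
  generalize hF_def : (fun u : ℝ × ℝ => Hfun ((a, b) + u.1 • (-b, a) + u.2 • (a, b))) = F at hF ⊢
  set φ := fun r : ℝ => Hfun ((a, b) + r • (-b, a))
  have hFφ (s t : ℝ) (ht : 1 + t ≠ 0) : F (s, t) = (1 + t) * φ ((1 + t)⁻¹ * s) := by
    subst hF_def
    exact Hfun_frame ht
  rw [pd1_congr hV (pd2_pd1_comm (contDiffOn_pd2_iterate hF hV _) hV) h0,
    ← Function.iterate_succ_apply' pd2, ← Function.iterate_succ_apply' pd2,
    pd1_pd2_iterate_succ_eq_zero_of_perspective hV h0 hF hFφ,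
    pd1_pd1_pd2_iterate_of_perspective hV h0 hF hFφ, iteratedDeriv_two_Hfun_tangent ha hab hu,
    Kxi_eq ha hab hu]
  -- `q - 1` truncates at `q = 0`, where `(q - 1).succ = 1` still has factorial `q!`.
  have hfact : (q - 1).succ.factorial = q.factorial := by cases q <;> simp
  have hsign : ((-1 : ℝ) ^ (q - 1).succ) ^ 2 = 1 := by rw [← pow_mul, pow_mul', neg_one_sq, one_pow]
  rw [hfact, ← inv_pow, inv_div]
  linear_combination (-(q.factorial * π * sin (π * a / b) / b ^ 3) ^ 2) * hsign

theorem hq_value_at_orthonormal_frame (q : ℕ) (hq1 : 1 ≤ q) (ξ : ℝ × ℝ)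
    (hξc : ξ ∈ cone0) (hξu : enorm2 ξ = 1) :
    hq q ξ (-ξ.2, ξ.1) (ξ.1, ξ.2) = -((q.factorial : ℝ))^2 * (Kxi ξ ^ 2)⁻¹ :=
  hq_value_at_orthonormal_frame_general q ξ hξc hξu
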